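/- For every finite set A of integers, there exists an enumeration of A (a bijection σ : {1,…,|A|} → A) such that the sequence σ(1), …, σ(|A|) contains no 3-term arithmetic progression: there are no indices i₁ < i₂ < i₃ and nonzero integer d with σ(i₂) = σ(i₁) + d and σ(i₃) = σ(i₂) + d. -/

import Mathlib

/-!
Order the integers 2-adically: compare the binary digits (two's complement for negative numbers)
starting from the least significant one, lexicographically. If `x < y < z` in this order and
`x + z = 2 * y`, then `x`, `y`, `z` share their lowest digit (the first digits satisfy
`x₀ ≤ y₀ ≤ z₀`, while `x₀ = z₀` by parity), so `x / 2 < y / 2 < z / 2` is a shorter progression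
of the same kind. Hence listing a finite set in increasing 2-adic order avoids 3-term progressions.
-/

open Finset Function

theorem Pi.toLex_nat_lt_toLex_iff {β : Type*} [LT β] {f g : ℕ → β} :
    toLex f < toLex g ↔
      f 0 < g 0 ∨ f 0 = g 0 ∧ toLex (fun n ↦ f (n + 1)) < toLex (fun n ↦ g (n + 1)) := by
  constructor
  · rintro ⟨i, hlt, hi⟩
    cases i with
    | zero => exact Or.inl hi
    | succ i => exact Or.inr ⟨hlt 0 i.succ_pos, i, fun j hj ↦ hlt (j + 1) (by omega), hi⟩
  · rintro (h | ⟨h0, i, hlt, hi⟩)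
    · exact ⟨0, fun j hj ↦ absurd hj j.not_lt_zero, h⟩
    · refine ⟨i + 1, fun j hj ↦ ?_, hi⟩
      cases j with
      | zero => exact h0
      | succ j => exact hlt j (by omega)

theorem Finset.exists_enumeration_strictMono_comp {α β : Type*} [LinearOrder β] (f : α → β)
    (hf : Injective f) (A : Finset α) :
    ∃ σ : Fin #A → α, Injective σ ∧ Set.range σ = A ∧ StrictMono (f ∘ σ) := by
  let : LinearOrder α := LinearOrder.lift' f hf
  exact ⟨A.orderEmbOfFin rfl, (A.orderEmbOfFin rfl).injective, A.range_orderEmbOfFin rfl,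
    fun _ _ hij ↦ (A.orderEmbOfFin rfl).strictMono hij⟩

namespace Int

def twoAdicDigits (x : ℤ) : Lex (ℕ → ℤ) :=
  toLex fun n ↦ x / 2 ^ n % 2

theorem twoAdicDigits_succ (x : ℤ) (n : ℕ) :
    twoAdicDigits x (n + 1) = twoAdicDigits (x / 2) n := by
  simp only [twoAdicDigits, Pi.toLex_apply, pow_succ', Int.ediv_ediv_of_nonneg two_pos.le]

theorem twoAdicDigits_lt_twoAdicDigits_iff {x y : ℤ} :
    twoAdicDigits x < twoAdicDigits y ↔
      x % 2 < y % 2 ∨ x % 2 = y % 2 ∧ twoAdicDigits (x / 2) < twoAdicDigits (y / 2) := by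
  unfold twoAdicDigits
  rw [Pi.toLex_nat_lt_toLex_iff]
  simp only [pow_zero, Int.ediv_one, pow_succ', ← Int.ediv_ediv_of_nonneg two_pos.le]

theorem twoAdicDigits_injective : Injective twoAdicDigits := by
  intro x y hxy
  induction hn : (x - y).natAbs using Nat.strong_induction_on generalizing x y with
  | _ n ih =>
  have hmod : x % 2 = y % 2 := by simpa [twoAdicDigits] using congrFun hxy 0
  have hhalf : (x / 2).twoAdicDigits = (y / 2).twoAdicDigits :=
    funext fun k ↦ by rw [← twoAdicDigits_succ, ← twoAdicDigits_succ, hxy]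
  by_contra hne
  have := ih _ (by omega) hhalf rfl
  omega

theorem not_twoAdicDigits_lt_lt_of_add_eq {x y z : ℤ} (h : x + z = 2 * y) :
    ¬ (twoAdicDigits x < twoAdicDigits y ∧ twoAdicDigits y < twoAdicDigits z) := by
  induction hn : (y - x).natAbs using Nat.strong_induction_on generalizing x y z with
  | _ n ih =>
  rintro ⟨hxy, hyz⟩
  have hne : x ≠ y := by rintro rfl; exact lt_irrefl _ hxy
  rw [twoAdicDigits_lt_twoAdicDigits_iff] at hxy hyz
  rcases hxy with hxy | ⟨hxy₀, hxy⟩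
  · omega
  rcases hyz with hyz | ⟨hyz₀, hyz⟩
  · omega
  exact ih _ (by omega) (by omega) rfl ⟨hxy, hyz⟩

end Int

/-- Every finite set of integers can be enumerated so that the resulting sequence
contains no 3-term arithmetic progression. -/
theorem exists_enumeration_avoiding_3AP (A : Finset ℤ) :
    ∃ σ : Fin A.card → ℤ, Function.Injective σ ∧ Set.range σ = ↑A ∧
      ¬ ∃ (i₁ i₂ i₃ : Fin A.card) (d : ℤ), i₁ < i₂ ∧ i₂ < i₃ ∧ d ≠ 0 ∧
        σ i₂ = σ i₁ + d ∧ σ i₃ = σ i₂ + d := by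
  obtain ⟨σ, hinj, hrange, hmono⟩ :=
    A.exists_enumeration_strictMono_comp _ Int.twoAdicDigits_injective
  refine ⟨σ, hinj, hrange, ?_⟩
  rintro ⟨i₁, i₂, i₃, d, h₁₂, h₂₃, -, h₂, h₃⟩
  exact Int.not_twoAdicDigits_lt_lt_of_add_eq (by omega) ⟨hmono h₁₂, hmono h₂₃⟩
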